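/- arXiv:2503.22650 — 2 statements merged into one kernel-verified Lean document; each statement's English description precedes it below -/
import Mathlib

section
/- Let n ≥ 2. Then b_j > 0 for every j ∈ [n−1], b_n = 0, and Σ_{j=1}^{n−1} b_j = (q₃)_n. -/
open scoped BigOperators

namespace NonFreePaper

/-- `N = n(n²−1)/6 + (n−1)/n`. -/
noncomputable def Nconst (n : ℕ) : ℝ :=
  ((n : ℝ) * ((n : ℝ) ^ 2 - 1)) / 6 + ((n : ℝ) - 1) / n

/-- `(h₁)_j = (n+1−2j)/2` for `j ∈ [n]` (1-based index). -/
noncomputable def h1 (n : ℕ) (j : ℕ) : ℝ := ((n : ℝ) + 1 - 2 * j) / 2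

/-- `h₂ = h₁`. -/
noncomputable def h2 (n : ℕ) (j : ℕ) : ℝ := h1 n j

/-- `(h₃)_j = 1/n` for `j ∈ [n−1]` and `(h₃)_n = 1/n − 1` (1-based index). -/
noncomputable def h3 (n : ℕ) (j : ℕ) : ℝ :=
  if j = n then 1 / (n : ℝ) - 1 else 1 / (n : ℝ)

/-- `(q₁)_j = 1/n + (n+1−2j)/(2nN)` for `j ∈ [n]` (1-based index). -/
noncomputable def q1 (n : ℕ) (j : ℕ) : ℝ :=
  1 / (n : ℝ) + ((n : ℝ) + 1 - 2 * j) / (2 * n * Nconst n)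

/-- `q₂ = q₁`. -/
noncomputable def q2 (n : ℕ) (j : ℕ) : ℝ := q1 n j

/-- `(q₃)_j = 1/n + 1/(n²N)` for `j ∈ [n−1]`, and `(q₃)_n = 1/n + (1/n − 1)/(nN)`
(1-based index). -/
noncomputable def q3 (n : ℕ) (j : ℕ) : ℝ :=
  if j = n then 1 / (n : ℝ) + (1 / (n : ℝ) - 1) / (n * Nconst n)
  else 1 / (n : ℝ) + 1 / ((n : ℝ) ^ 2 * Nconst n)

/-- `b_j = Σ_{ℓ=1}^j ((q₂)_ℓ − (q₁)_{n+1−ℓ})`; in particular `b 0 = 0`. -/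
noncomputable def bseq (n : ℕ) (j : ℕ) : ℝ :=
  ∑ ℓ ∈ Finset.range j, (q2 n (ℓ + 1) - q1 n (n - ℓ))
lemma Nconst_pos (n : ℕ) (hn : 2 ≤ n) : 0 < Nconst n := by
  have hn' : (2 : ℝ) ≤ (n : ℝ) := by exact_mod_cast hn
  have hn0 : (0 : ℝ) < (n : ℝ) := by linarith
  unfold Nconst
  have h1 : 0 < ((n : ℝ) * ((n : ℝ) ^ 2 - 1)) / 6 := by nlinarith
  have h2 : 0 ≤ ((n : ℝ) - 1) / n := div_nonneg (by linarith) (by linarith)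
  linarith

lemma bseq_closed (n : ℕ) (hn : 2 ≤ n) :
    ∀ j : ℕ, j ≤ n → bseq n j = (j : ℝ) * ((n : ℝ) - j) / ((n : ℝ) * Nconst n) := by
  have hN := Nconst_pos n hn
  have hN0 : Nconst n ≠ 0 := ne_of_gt hN
  have hn' : (2 : ℝ) ≤ (n : ℝ) := by exact_mod_cast hn
  have hn0 : (n : ℝ) ≠ 0 := by linarith
  intro j
  induction j with
  | zero => intro _; simp [bseq]
  | succ j ih =>
    intro hj
    have hjn : j < n := Nat.lt_of_succ_le hj
    have hjn' : j ≤ n := le_of_lt hjn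
    have hcast : ((n - j : ℕ) : ℝ) = (n : ℝ) - (j : ℝ) := by
      rw [Nat.cast_sub hjn']
    rw [bseq, Finset.sum_range_succ, ← bseq, ih hjn']
    rw [q2, q1, q1, hcast]
    push_cast
    field_simp
    ring

set_option maxHeartbeats 1000000 in
/-- `b_j > 0` for `j ∈ [n−1]`, `b_n = 0`, and
`Σ_{j=1}^{n−1} b_j = (q₃)_n`. -/
theorem b_basic_properties (n : ℕ) (hn : 2 ≤ n) :
    (∀ j : ℕ, 1 ≤ j → j ≤ n - 1 → 0 < bseq n j) ∧
    bseq n n = 0 ∧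
    (∑ j ∈ Finset.range (n - 1), bseq n (j + 1)) = q3 n n := by
  have hN := Nconst_pos n hn
  have hN0 : Nconst n ≠ 0 := ne_of_gt hN
  have hn' : (2 : ℝ) ≤ (n : ℝ) := by exact_mod_cast hn
  have hn0 : (n : ℝ) ≠ 0 := by linarith
  refine ⟨?_, ?_, ?_⟩
  · intro j h1j hjn
    have hjn' : j ≤ n := le_trans hjn (Nat.sub_le n 1)
    rw [bseq_closed n hn j hjn']
    have hjlt : j < n := by omega
    have hjr : (j : ℝ) < (n : ℝ) := by exact_mod_cast hjlt
    have hj0 : (0 : ℝ) < (j : ℝ) := by exact_mod_cast h1j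
    have h : (0:ℝ) < (n : ℝ) * Nconst n := by positivity
    exact div_pos (mul_pos hj0 (by linarith)) h
  · rw [bseq_closed n hn n le_rfl]; ring
  · have key : ∀ m : ℕ, m ≤ n - 1 →
        (∑ j ∈ Finset.range m, bseq n (j + 1)) =
        ((m : ℝ) * (m + 1) / 2 * n - (m : ℝ) * (m + 1) * (2 * m + 1) / 6)
          / ((n : ℝ) * Nconst n) := by
      intro m
      induction m with
      | zero => intro _; simp
      | succ m ih =>
        intro hm
        have hm' : m ≤ n - 1 := by omega
        have hm1 : m + 1 ≤ n := by omega
        rw [Finset.sum_range_succ, ih hm', bseq_closed n hn (m + 1) hm1]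
        push_cast
        field_simp
        ring
    rw [key (n - 1) le_rfl]
    have hcast : ((n - 1 : ℕ) : ℝ) = (n : ℝ) - 1 := by
      rw [Nat.cast_sub (by omega)]; norm_num
    rw [hcast]
    have hD : (n:ℝ) * Nconst n = ((n:ℝ)^2*((n:ℝ)^2-1)+6*((n:ℝ)-1))/6 := by
      rw [Nconst]; field_simp
    have hD0 : (n:ℝ) * Nconst n ≠ 0 := mul_ne_zero hn0 hN0
    rw [hD] at hD0
    have hP : (n:ℝ)^2*((n:ℝ)^2-1)+6*((n:ℝ)-1) ≠ 0 := by
      intro h; apply hD0; rw [h]; norm_num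
    rw [q3, if_pos rfl, hD]
    field_simp [hP]
    have hX : (-6 + (n:ℝ)*6 - (n:ℝ)^2 + (n:ℝ)^4) ≠ 0 := by
      intro h; apply hP; linear_combination h
    linear_combination 2 * mul_inv_cancel₀ hX

end NonFreePaper
end

section
/- For every n ≥ 2 the set 𝒲ₙ is nonempty: there exists a complex n×(n−1) matrix W with W*W = λ·I_{n−1} and W·W* = λ·Iₙ − w·wᵀ, where λ = (1 − (q₃)_n)/(n−1) and w ∈ ℝⁿ has entries w_j = √(λ − (q₂)_j + b_j). -/
open scoped BigOperators Matrix

namespace NonFreePaper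

abbrev Tensor (a b c : ℕ) := Fin a → Fin b → Fin c → ℂ

/-- `λ = (1 − (q₃)ₙ)/(n−1)`. -/
noncomputable def lamW (n : ℕ) : ℝ := (1 - q3 n n) / ((n : ℝ) - 1)

/-- `w_j = √(λ − (q₂)_j + b_j)` (`j` is the 1-based index `j.val + 1`). -/
noncomputable def wvec (n : ℕ) (j : Fin n) : ℝ :=
  Real.sqrt (lamW n - q2 n (j.val + 1) + bseq n (j.val + 1))

/-- The set `𝒲ₙ` of `n × (n−1)` matrices `W` with `W*W = λ·I` and
`WW* = λ·I − wwᵀ`. -/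
noncomputable def WSet (n : ℕ) : Set (Matrix (Fin n) (Fin (n - 1)) ℂ) :=
  {W | Wᴴ * W = (lamW n : ℂ) • (1 : Matrix (Fin (n - 1)) (Fin (n - 1)) ℂ) ∧
       W * Wᴴ = (lamW n : ℂ) • (1 : Matrix (Fin n) (Fin n) ℂ)
          - Matrix.of (fun i j => ((wvec n i * wvec n j : ℝ) : ℂ))}

/-- The tensor `T^W`: `(T^W)_{n+1−i,i,k} = W_{i,k}` for `i ∈ [n]`, `k ∈ [n−1]`,
`(T^W)_{n−i,i,n} = √(b_i)` for `i ∈ [n−1]`, all other entries `0`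
(1-based indices). -/
noncomputable def TW {n : ℕ} (W : Matrix (Fin n) (Fin (n - 1)) ℂ) : Tensor n n n :=
  fun x y z =>
    if h : z.val + 1 < n ∧ x.val + y.val + 1 = n then W y ⟨z.val, by omega⟩
    else if z.val + 1 = n ∧ x.val + y.val + 2 = n then
      (Real.sqrt (bseq n (y.val + 1)) : ℂ)
    else 0
variable {n : ℕ}

lemma two_le (hn : 2 ≤ n) : (2:ℝ) ≤ (n:ℝ) := by exact_mod_cast hn
lemma Npos (hn : 2 ≤ n) : 0 < Nconst n := by
  have h := two_le hn
  have h0 : (0:ℝ) < n := by linarith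
  have : (0:ℝ) < ((n : ℝ) - 1) / n := by
    apply div_pos <;> linarith
  have : (0:ℝ) < ((n : ℝ) * ((n : ℝ) ^ 2 - 1)) / 6 := by nlinarith
  unfold Nconst; nlinarith

lemma lamW_eq (hn : 2 ≤ n) : lamW n = 1 / (n:ℝ) + 1 / ((n:ℝ)^2 * Nconst n) := by
  have h := two_le hn
  have hN := Npos hn
  unfold lamW q3
  rw [if_pos rfl]
  have h1 : (n:ℝ) ≠ 0 := by linarith
  have h2 : (n:ℝ) - 1 ≠ 0 := by linarith
  have h3 : Nconst n ≠ 0 := ne_of_gt hN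
  field_simp
  ring

lemma lamW_pos (hn : 2 ≤ n) : 0 < lamW n := by
  rw [lamW_eq hn]
  have h := two_le hn
  have hN := Npos hn
  have h1 : (0:ℝ) < n := by linarith
  positivity

lemma bseq_eq (hn : 2 ≤ n) {j : ℕ} (hj : j ≤ n) :
    bseq n j = (j * ((n:ℝ) - j)) / ((n:ℝ) * Nconst n) := by
  have h := two_le hn
  have hN := Npos hn
  have h1 : (n:ℝ) ≠ 0 := by linarith
  have h3 : Nconst n ≠ 0 := ne_of_gt hN
  induction j with
  | zero => simp [bseq]
  | succ k ih =>
    have hk : k ≤ n := by omega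
    rw [bseq, Finset.sum_range_succ, ← bseq, ih hk]
    have hcast : ((n - k : ℕ) : ℝ) = (n:ℝ) - k := by
      have : k ≤ n := hk; push_cast [this]; ring
    unfold q2 q1
    rw [hcast]
    push_cast
    field_simp
    ring

lemma entry_nonneg (hn : 2 ≤ n) {j : ℕ} (h1j : 1 ≤ j) (hj : j ≤ n) :
    0 ≤ lamW n - q2 n j + bseq n j := by
  have h := two_le hn
  have hN := Npos hn
  have hn0 : (n:ℝ) ≠ 0 := by linarith
  have hN0 : Nconst n ≠ 0 := ne_of_gt hN
  have hx1 : (1:ℝ) ≤ (j:ℝ) := by exact_mod_cast h1j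
  have hx2 : (j:ℝ) ≤ (n:ℝ) := by exact_mod_cast hj
  have key : (0:ℝ) ≤ 2/(n:ℝ) + 2*(j:ℝ) - (n:ℝ) - 1 + 2*(j:ℝ)*((n:ℝ)-(j:ℝ)) := by
    have hh : (0:ℝ) ≤ ((j:ℝ)-1)*((n:ℝ)-(j:ℝ)) := by nlinarith
    have : (0:ℝ) < 2/(n:ℝ) := by positivity
    nlinarith
  have heq : lamW n - q2 n j + bseq n j
      = (2/(n:ℝ) + 2*(j:ℝ) - (n:ℝ) - 1 + 2*(j:ℝ)*((n:ℝ)-(j:ℝ))) / (2*(n:ℝ)*Nconst n) := by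
    rw [lamW_eq hn, bseq_eq hn hj]
    unfold q2 q1
    field_simp
    ring
  rw [heq]
  positivity

lemma sum_range_cast (k : ℕ) : ∑ j ∈ Finset.range k, (j:ℝ) = k*(k-1)/2 := by
  induction k with
  | zero => simp
  | succ m ih => rw [Finset.sum_range_succ, ih]; push_cast; ring

lemma sum_range_sq (k : ℕ) : ∑ j ∈ Finset.range k, (j:ℝ)^2 = k*(k-1)*(2*k-1)/6 := by
  induction k with
  | zero => simp
  | succ m ih => rw [Finset.sum_range_succ, ih]; push_cast; ring

lemma sum_entries (hn : 2 ≤ n) :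
    ∑ j ∈ Finset.range n, (lamW n - q2 n (j+1) + bseq n (j+1)) = lamW n := by
  have h := two_le hn
  have hN := Npos hn
  have hn0 : (n:ℝ) ≠ 0 := by linarith
  have hN0 : Nconst n ≠ 0 := ne_of_gt hN
  set N := Nconst n with hNdef
  set L := lamW n with hLdef
  have hcong : ∀ j ∈ Finset.range n, (L - q2 n (j+1) + bseq n (j+1))
      = (L - 1/(n:ℝ) + ((n:ℝ)-1)/(2*(n:ℝ)*N))
        + (((n:ℝ)-1)/((n:ℝ)*N)) * (j:ℝ) + (-(1/((n:ℝ)*N))) * (j:ℝ)^2 := by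
    intro j hj
    have hj' : j + 1 ≤ n := by simpa using Finset.mem_range.mp hj
    rw [bseq_eq hn hj']
    unfold q2 q1
    push_cast
    rw [← hNdef]
    field_simp
    ring
  rw [Finset.sum_congr rfl hcong]
  simp only [Finset.sum_add_distrib, Finset.sum_const, Finset.card_range,
    ← Finset.mul_sum, sum_range_cast, sum_range_sq, nsmul_eq_mul]
  have hrel : 6*(n:ℝ)*N = (n:ℝ)^2*((n:ℝ)^2-1) + 6*((n:ℝ)-1) := by
    rw [hNdef]; unfold Nconst; field_simp
  rw [hLdef, lamW_eq hn, ← hNdef]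
  field_simp
  ring_nf
  linear_combination (-2) * hrel

lemma wvec_nonneg (j : Fin n) : 0 ≤ wvec n j := Real.sqrt_nonneg _

lemma wvec_sq (hn : 2 ≤ n) (j : Fin n) :
    wvec n j ^ 2 = lamW n - q2 n (j.val + 1) + bseq n (j.val + 1) := by
  exact Real.sq_sqrt (entry_nonneg hn (by omega) (by omega))

lemma sum_wvec_sq (hn : 2 ≤ n) : ∑ j : Fin n, wvec n j ^ 2 = lamW n := by
  calc ∑ j : Fin n, wvec n j ^ 2
      = ∑ j : Fin n, (lamW n - q2 n (j.val + 1) + bseq n (j.val + 1)) :=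
        Finset.sum_congr rfl (fun j _ => wvec_sq hn j)
    _ = ∑ j ∈ Finset.range n, (lamW n - q2 n (j + 1) + bseq n (j + 1)) :=
        Fin.sum_univ_eq_sum_range (fun j => lamW n - q2 n (j + 1) + bseq n (j + 1)) n
    _ = lamW n := sum_entries hn

section Construction
variable (m : ℕ)

noncomputable def uu : Fin (m+2) → ℝ :=
  fun i => wvec (m+2) i + if i = Fin.last (m+1) then Real.sqrt (lamW (m+2)) else 0

noncomputable def nuu : ℝ := ∑ i, uu m i ^ 2

noncomputable def HH : Matrix (Fin (m+2)) (Fin (m+2)) ℝ :=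
  fun i j => (if i = j then 1 else 0) - (2 / nuu m) * (uu m i * uu m j)

lemma hs_sq : Real.sqrt (lamW (m+2)) ^ 2 = lamW (m+2) :=
  Real.sq_sqrt (le_of_lt (lamW_pos (by omega)))

lemma hs_pos : 0 < Real.sqrt (lamW (m+2)) :=
  Real.sqrt_pos.mpr (lamW_pos (by omega))

lemma nuu_eq : nuu m = 2 * Real.sqrt (lamW (m+2)) * uu m (Fin.last (m+1)) := by
  set s := Real.sqrt (lamW (m+2)) with hs
  have h1 : ∀ i, uu m i ^ 2
      = wvec (m+2) i ^ 2 + (if i = Fin.last (m+1) then 2 * wvec (m+2) i * s + s^2 else 0) := by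
    intro i
    by_cases h : i = Fin.last (m+1) <;> simp [uu, h, ← hs] <;> ring
  rw [nuu]
  rw [Finset.sum_congr rfl (fun i _ => h1 i), Finset.sum_add_distrib]
  rw [Finset.sum_ite_eq' Finset.univ (Fin.last (m+1)) _]
  simp only [Finset.mem_univ, if_true]
  rw [sum_wvec_sq (by omega)]
  have : uu m (Fin.last (m+1)) = wvec (m+2) (Fin.last (m+1)) + s := by simp [uu, ← hs]
  rw [this, ← hs_sq m]
  ring

lemma uu_last_pos : 0 < uu m (Fin.last (m+1)) := by
  have : uu m (Fin.last (m+1)) = wvec (m+2) (Fin.last (m+1)) + Real.sqrt (lamW (m+2)) := by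
    simp [uu]
  rw [this]
  have := wvec_nonneg (n := m+2) (Fin.last (m+1))
  have := hs_pos m
  linarith

lemma nuu_pos : 0 < nuu m := by
  rw [nuu_eq]
  have := hs_pos m
  have := uu_last_pos m
  positivity

lemma key1 : (2 / nuu m) * uu m (Fin.last (m+1)) * Real.sqrt (lamW (m+2)) = 1 := by
  have h1 := hs_pos m
  have h2 := uu_last_pos m
  rw [nuu_eq]
  rw [div_mul_eq_mul_div, div_mul_eq_mul_div, div_eq_one_iff_eq (by positivity)]
  ring

lemma HH_symm (i j : Fin (m+2)) : HH m i j = HH m j i := by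
  by_cases h : i = j
  · subst h; rfl
  · simp only [HH, if_neg h, if_neg (Ne.symm h)]; ring

lemma HH_mul (i j : Fin (m+2)) :
    ∑ k, HH m i k * HH m k j = if i = j then 1 else 0 := by
  have hnu := nuu_pos m
  set c := 2 / nuu m with hc
  set u := uu m with hu
  have expand : ∀ k, HH m i k * HH m k j =
      (if i = k then (1:ℝ) else 0) * (if k = j then (1:ℝ) else 0)
      - (if i = k then (1:ℝ) else 0) * (c * (u k * u j))
      - (if k = j then (1:ℝ) else 0) * (c * (u i * u k))
      + c^2 * (u i * u j) * u k ^ 2 := by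
    intro k
    simp only [HH, ← hc, ← hu]
    ring
  rw [Finset.sum_congr rfl (fun k _ => expand k)]
  rw [Finset.sum_add_distrib, Finset.sum_sub_distrib, Finset.sum_sub_distrib]
  simp only [ite_mul, one_mul, zero_mul]
  rw [Finset.sum_ite_eq Finset.univ i (fun k => if k = j then (1:ℝ) else 0)]
  rw [Finset.sum_ite_eq Finset.univ i (fun k => c * (u k * u j))]
  rw [Finset.sum_ite_eq' Finset.univ j (fun k => c * (u i * u k))]
  rw [← Finset.mul_sum]
  have hsum : ∑ k, u k ^ 2 = nuu m := rfl
  rw [hsum]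
  simp only [Finset.mem_univ, if_true]
  have hcc : c^2 * nuu m = 2*c := by
    rw [hc]; field_simp
  have h2 : c ^ 2 * (u i * u j) * nuu m = 2*c*(u i * u j) := by
    linear_combination (u i * u j) * hcc
  rw [h2]
  ring

lemma sH_last (i : Fin (m+2)) :
    Real.sqrt (lamW (m+2)) * HH m i (Fin.last (m+1)) = -(wvec (m+2) i) := by
  have k1 := key1 m
  set s := Real.sqrt (lamW (m+2)) with hs
  set c := 2 / nuu m with hc
  by_cases h : i = Fin.last (m+1)
  · subst h
    have hul : uu m (Fin.last (m+1)) = wvec (m+2) (Fin.last (m+1)) + s := by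
      simp [uu, ← hs]
    simp only [HH]
    simp only [if_true]
    rw [← hc]
    linear_combination (-(uu m (Fin.last (m+1)))) * k1 - hul
  · have hui : uu m i = wvec (m+2) i := by simp [uu, h]
    simp only [HH]
    rw [if_neg h]
    rw [← hc]
    linear_combination (-(uu m i)) * k1 - hui

def emb (m : ℕ) (k : Fin (m+2-1)) : Fin (m+2) := ⟨k.val, by have := k.isLt; omega⟩

lemma emb_inj {m : ℕ} {a b : Fin (m+2-1)} (h : emb m a = emb m b) : a = b := by
  have hv : (emb m a).val = (emb m b).val := by rw [h]
  exact Fin.ext hv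

lemma R1 (a b : Fin (m+2-1)) :
    ∑ i : Fin (m+2), (Real.sqrt (lamW (m+2)) * HH m i (emb m a))
        * (Real.sqrt (lamW (m+2)) * HH m i (emb m b))
      = if a = b then lamW (m+2) else 0 := by
  set s := Real.sqrt (lamW (m+2)) with hs
  have step : ∀ i, (s * HH m i (emb m a)) * (s * HH m i (emb m b))
      = s^2 * (HH m (emb m a) i * HH m i (emb m b)) := by
    intro i
    rw [HH_symm m i (emb m a)]
    ring
  rw [Finset.sum_congr rfl (fun i _ => step i), ← Finset.mul_sum, HH_mul]
  rw [hs, hs_sq]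
  by_cases hab : a = b
  · simp [hab]
  · rw [if_neg hab, if_neg (fun h => hab (emb_inj h))]
    ring

lemma R2 (i j : Fin (m+2)) :
    ∑ k : Fin (m+2-1), (Real.sqrt (lamW (m+2)) * HH m i (emb m k))
        * (Real.sqrt (lamW (m+2)) * HH m j (emb m k))
      = (if i = j then lamW (m+2) else 0) - wvec (m+2) i * wvec (m+2) j := by
  set s := Real.sqrt (lamW (m+2)) with hs
  have full : ∑ K : Fin (m+2), (s * HH m i K) * (s * HH m j K)
      = ∑ k : Fin (m+2-1), (s * HH m i (emb m k)) * (s * HH m j (emb m k))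
        + (s * HH m i (Fin.last (m+1))) * (s * HH m j (Fin.last (m+1))) :=
    Fin.sum_univ_castSucc (f := fun K => (s * HH m i K) * (s * HH m j K))
  have lhs : ∑ K : Fin (m+2), (s * HH m i K) * (s * HH m j K)
      = if i = j then lamW (m+2) else 0 := by
    have step : ∀ K, (s * HH m i K) * (s * HH m j K)
        = s^2 * (HH m i K * HH m K j) := by
      intro K
      rw [HH_symm m j K]
      ring
    rw [Finset.sum_congr rfl (fun K _ => step K), ← Finset.mul_sum, HH_mul]
    rw [hs, hs_sq]
    by_cases hij : i = j <;> simp [hij]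
  have hl : (s * HH m i (Fin.last (m+1))) * (s * HH m j (Fin.last (m+1)))
      = wvec (m+2) i * wvec (m+2) j := by
    rw [← hs] at *
    rw [sH_last, sH_last]
    ring
  rw [lhs, hl] at full
  linarith

end Construction

noncomputable def Wmat (m : ℕ) : Matrix (Fin (m+2)) (Fin (m+2-1)) ℂ :=
  Matrix.of fun i k => ((Real.sqrt (lamW (m+2)) * HH m i (emb m k) : ℝ) : ℂ)

/-- The set `𝒲ₙ` is nonempty for every `n ≥ 2`. -/
theorem WSet_nonempty (n : ℕ) (hn : 2 ≤ n) : (WSet n).Nonempty := by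
  obtain ⟨m, rfl⟩ : ∃ m, n = m + 2 := ⟨n - 2, by omega⟩
  refine ⟨Wmat m, ?_, ?_⟩
  · ext a b
    rw [Matrix.mul_apply]
    simp only [Matrix.conjTranspose_apply, Wmat, Matrix.of_apply, Matrix.smul_apply,
      Matrix.one_apply, smul_eq_mul]
    have hterm : ∀ i : Fin (m+2),
        star (((Real.sqrt (lamW (m+2)) * HH m i (emb m a) : ℝ)) : ℂ)
          * (((Real.sqrt (lamW (m+2)) * HH m i (emb m b) : ℝ)) : ℂ)
        = (((Real.sqrt (lamW (m+2)) * HH m i (emb m a))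
            * (Real.sqrt (lamW (m+2)) * HH m i (emb m b)) : ℝ) : ℂ) := by
      intro i
      rw [Complex.star_def, Complex.conj_ofReal, ← Complex.ofReal_mul]
    rw [Finset.sum_congr rfl (fun i _ => hterm i), ← Complex.ofReal_sum, R1]
    by_cases hab : a = b <;> simp [hab]
  · ext i j
    rw [Matrix.mul_apply]
    simp only [Matrix.conjTranspose_apply, Wmat, Matrix.of_apply, Matrix.sub_apply,
      Matrix.smul_apply, Matrix.one_apply, smul_eq_mul]
    have hterm : ∀ k : Fin (m+2-1),
        (((Real.sqrt (lamW (m+2)) * HH m i (emb m k) : ℝ)) : ℂ)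
          * star (((Real.sqrt (lamW (m+2)) * HH m j (emb m k) : ℝ)) : ℂ)
        = (((Real.sqrt (lamW (m+2)) * HH m i (emb m k))
            * (Real.sqrt (lamW (m+2)) * HH m j (emb m k)) : ℝ) : ℂ) := by
      intro k
      rw [Complex.star_def, Complex.conj_ofReal, ← Complex.ofReal_mul]
    rw [Finset.sum_congr rfl (fun k _ => hterm k), ← Complex.ofReal_sum, R2]
    push_cast
    by_cases hij : i = j <;> simp [hij]


end NonFreePaper
end
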